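/- Let I ⊆ ℂ[x,y] be a monomial ideal of finite colength which is normal, i.e. whose Rees algebra is integrally closed in its field of fractions. Then there exists a unique finitely supported function δ, defined on the set of pairs (α,β) of positive integers with gcd(α,β) = 1 and taking values in ℕ, such that I = ∏_{(α,β)} n_{α,β}^{δ(α,β)} (the product being over the finitely many pairs where δ is nonzero). -/

import Mathlib

open MvPolynomial

/-- A monomial ideal of `ℂ[x,y]`: an ideal generated by monomials `x^a y^b`. -/
def IsMonomialIdeal (I : Ideal (MvPolynomial (Fin 2) ℂ)) : Prop :=
  ∃ S : Set (ℕ × ℕ),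
    I = Ideal.span ((fun ab : ℕ × ℕ => (X 0 : MvPolynomial (Fin 2) ℂ) ^ ab.1 * X 1 ^ ab.2) '' S)

/-- `n_{α,β}`: the normalisation of the ideal `(x^α, y^β) ⊆ ℂ[x,y]`, i.e. the monomial ideal
generated by all monomials `x^a y^b` such that `(x^a y^b)^p ∈ (x^α, y^β)^p` for some `p ≥ 1`. -/
noncomputable def nIdeal (α β : ℕ) : Ideal (MvPolynomial (Fin 2) ℂ) :=
  Ideal.span {f : MvPolynomial (Fin 2) ℂ | ∃ a b : ℕ,
    f = X 0 ^ a * X 1 ^ b ∧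
    ∃ p : ℕ, 1 ≤ p ∧
      ((X 0 : MvPolynomial (Fin 2) ℂ) ^ a * X 1 ^ b) ^ p ∈
        (Ideal.span {(X 0 : MvPolynomial (Fin 2) ℂ) ^ α, X 1 ^ β}) ^ p}

/-!
Write `Γ = {(a, b) | x^a y^b ∈ I}`. Monomial ideals correspond to upper sets of `ℕ × ℕ`, products
to Minkowski sums, and `n_{α,β}` to `halfPlane α β`, the lattice points on or above the segment
from `(α, 0)` to `(0, β)`. Normality of `I` makes `Γ` contain every lattice point dominating a
rational point of a segment between two of its points.

Existence: let `(0, B)` be the lowest point of `Γ` on the `y`-axis. The first edge of the Newton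
polygon of `Γ` starting there has direction `g • (α, -β)` with `α, β` coprime, and
`Γ = g • halfPlane α β + {x | x + (g α, 0) ∈ Γ}` up to upper closure; the second summand meets the
`y`-axis at `B - g β`, so induction on `B` applies.

Uniqueness: the `(u, v)`-weighted order of `∏ n_p ^ δ p` is `∑ δ p * min (u p.1) (v p.2)`, an
invariant of the ideal. At `(u, v) = n • (β, α)` with `n` large, only the factor `n_{α,β}` fails to
be linear near `(u, v)`, so the mixed second difference there is `δ (α, β) * min α β`.
-/

open scoped Pointwise

theorem IsLeast.add {M : Type*} [AddMonoid M] [Preorder M] [AddLeftMono M] [AddRightMono M]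
    {s t : Set M} {a b : M} (ha : IsLeast s a) (hb : IsLeast t b) : IsLeast (s + t) (a + b) :=
  ⟨Set.add_mem_add ha.1 hb.1, add_mem_lowerBounds_add ha.2 hb.2⟩

theorem IsLeast.nsmul {M : Type*} [AddMonoid M] [Preorder M] [AddLeftMono M] [AddRightMono M]
    {s : Set M} {a : M} (ha : IsLeast s a) (n : ℕ) : IsLeast (n • s) (n • a) := by
  induction n with
  | zero => rw [zero_nsmul, zero_nsmul]; exact isLeast_singleton
  | succ n ih => simpa only [succ_nsmul] using ih.add ha

theorem Ideal.mem_of_pow_mem_pow_of_isIntegrallyClosed_reesAlgebra {R : Type*} [CommRing R]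
    [IsDomain R] {I : Ideal R} [IsIntegrallyClosed (reesAlgebra I)] (hI : I ≠ ⊥) {m : R} {n : ℕ}
    (hn : n ≠ 0) (hm : m ^ n ∈ I ^ n) : m ∈ I := by
  obtain ⟨c, hcI, hc0⟩ := Submodule.exists_mem_ne_zero_of_ne_bot hI
  let den : reesAlgebra I := ⟨Polynomial.C c, reesAlgebra.monomial_mem.2 (by simp)⟩
  let num : reesAlgebra I := ⟨Polynomial.monomial 1 (c * m),
    reesAlgebra.monomial_mem.2 (by simpa using I.mul_mem_right m hcI)⟩
  -- normality turns `den ^ n ∣ num ^ n` into `den ∣ num`, i.e. `m t ∈ reesAlgebra I`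
  have hdvd : den ^ n ∣ num ^ n :=
    ⟨⟨Polynomial.monomial n (m ^ n), reesAlgebra.monomial_mem.2 hm⟩, Subtype.ext <| by
      change Polynomial.monomial 1 (c * m) ^ n = Polynomial.C c ^ n * Polynomial.monomial n (m ^ n)
      rw [Polynomial.monomial_pow, ← Polynomial.C_pow, Polynomial.C_mul_monomial, one_mul, mul_pow]⟩
  obtain ⟨y, hy⟩ := (IsIntegrallyClosed.pow_dvd_pow_iff hn).1 hdvd
  have hy' : (y : Polynomial R) = Polynomial.monomial 1 m := by
    apply mul_left_cancel₀ (Polynomial.C_ne_zero.2 hc0)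
    rw [Polynomial.C_mul_monomial]
    exact (congrArg Subtype.val hy).symm
  have hmI := reesAlgebra.monomial_mem.1 (hy' ▸ y.2)
  rwa [pow_one] at hmI

theorem MvPolynomial.exists_X_pow_mem_span_monomial {σ K : Type*} [Field K] {S : Set (σ →₀ ℕ)}
    [FiniteDimensional K (MvPolynomial σ K ⧸ Ideal.span ((fun s => monomial s (1 : K)) '' S))]
    (k : σ) :
    ∃ n, (X k : MvPolynomial σ K) ^ n ∈ Ideal.span ((fun s => monomial s (1 : K)) '' S) := by
  classical
  set I := Ideal.span ((fun s => monomial s (1 : K)) '' S)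
  obtain ⟨p, hp, hpx⟩ := Algebra.IsIntegral.isIntegral (R := K) (Ideal.Quotient.mk I (X k))
  have hmem : Polynomial.aeval (X k : MvPolynomial σ K) p ∈ I := by
    rw [← Ideal.Quotient.eq_zero_iff_mem, ← Ideal.Quotient.mkₐ_eq_mk K,
      ← Polynomial.aeval_algHom_apply]
    exact hpx
  have hcoeff :
      coeff (Finsupp.single k p.natDegree) (Polynomial.aeval (X k : MvPolynomial σ K) p) ≠ 0 := by
    rw [Polynomial.aeval_eq_sum_range]
    simp [coeff_sum, X_pow_eq_monomial, coeff_monomial, (Finsupp.single_injective k).eq_iff,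
      hp.coeff_natDegree]
  obtain ⟨t, ht, hle⟩ := mem_ideal_span_monomial_image.1 hmem _ (mem_support_iff.2 hcoeff)
  refine ⟨p.natDegree, mem_ideal_span_monomial_image.2 fun m hm => ⟨t, ht, ?_⟩⟩
  rw [X_pow_eq_monomial] at hm
  rwa [Finset.mem_singleton.1 (support_monomial_subset hm)]

namespace MonomialIdeal

noncomputable def mon (x : ℕ × ℕ) : MvPolynomial (Fin 2) ℂ := X 0 ^ x.1 * X 1 ^ x.2

noncomputable def expVec (x : ℕ × ℕ) : Fin 2 →₀ ℕ := Finsupp.single 0 x.1 + Finsupp.single 1 x.2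

theorem expVec_le_expVec_iff {x y : ℕ × ℕ} : expVec x ≤ expVec y ↔ x ≤ y := by
  simp [Finsupp.le_def, Fin.forall_fin_two, expVec, Prod.le_def]

theorem mon_eq_monomial (x : ℕ × ℕ) : mon x = monomial (expVec x) 1 := by
  simp [mon, expVec, X_pow_eq_monomial, monomial_mul]

theorem mon_add (x y : ℕ × ℕ) : mon (x + y) = mon x * mon y := by
  simp only [mon, Prod.fst_add, Prod.snd_add, pow_add]
  ring

theorem mon_zero : mon 0 = 1 := by simp [mon]

theorem mon_nsmul (n : ℕ) (x : ℕ × ℕ) : mon (n • x) = mon x ^ n := by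
  simp only [mon, Prod.smul_fst, Prod.smul_snd, smul_eq_mul, mul_pow, ← pow_mul, mul_comm n]

theorem mon_dvd_mon {x y : ℕ × ℕ} (h : x ≤ y) : mon x ∣ mon y := by
  obtain ⟨z, rfl⟩ := exists_add_of_le h
  exact ⟨mon z, mon_add x z⟩

theorem isUpperSet_setOf_mon_mem (I : Ideal (MvPolynomial (Fin 2) ℂ)) :
    IsUpperSet {x | mon x ∈ I} :=
  fun _ _ hxy hx => I.mem_of_dvd (mon_dvd_mon hxy) hx

noncomputable def monIdeal (S : Set (ℕ × ℕ)) : Ideal (MvPolynomial (Fin 2) ℂ) :=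
  Ideal.span (mon '' S)

theorem monIdeal_eq_span_monomial (S : Set (ℕ × ℕ)) :
    monIdeal S = Ideal.span ((fun s => monomial s 1) '' (expVec '' S)) := by
  simp only [monIdeal, Set.image_image, mon_eq_monomial]

theorem mon_mem_monIdeal_iff {S : Set (ℕ × ℕ)} {x : ℕ × ℕ} :
    mon x ∈ monIdeal S ↔ ∃ s ∈ S, s ≤ x := by
  classical
  simp [monIdeal_eq_span_monomial, mem_ideal_span_monomial_image, mon_eq_monomial,
    support_monomial, expVec_le_expVec_iff]

theorem monIdeal_le_monIdeal {S T : Set (ℕ × ℕ)} (h : ∀ s ∈ S, ∃ t ∈ T, t ≤ s) :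
    monIdeal S ≤ monIdeal T :=
  Ideal.span_le.2 <| by
    rintro _ ⟨s, hs, rfl⟩
    exact mon_mem_monIdeal_iff.2 (h s hs)

theorem monIdeal_setOf_mon_mem {I : Ideal (MvPolynomial (Fin 2) ℂ)} {S : Set (ℕ × ℕ)}
    (hI : I = monIdeal S) : monIdeal {x | mon x ∈ I} = I := by
  refine le_antisymm (Ideal.span_le.2 ?_) (hI ▸ monIdeal_le_monIdeal fun s hs => ⟨s, ?_, le_rfl⟩)
  · rintro _ ⟨x, hx, rfl⟩
    exact hx
  · exact Ideal.subset_span ⟨s, hs, rfl⟩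

theorem exists_X_pow_mem {I : Ideal (MvPolynomial (Fin 2) ℂ)} {S : Set (ℕ × ℕ)}
    (hS : I = monIdeal S) [FiniteDimensional ℂ (MvPolynomial (Fin 2) ℂ ⧸ I)] (k : Fin 2) :
    ∃ n, X k ^ n ∈ I := by
  subst hS
  rw [monIdeal_eq_span_monomial] at *
  exact exists_X_pow_mem_span_monomial k

theorem monIdeal_add (S T : Set (ℕ × ℕ)) : monIdeal (S + T) = monIdeal S * monIdeal T := by
  rw [monIdeal, monIdeal, monIdeal, Ideal.span_mul_span', ← Set.image2_add, ← Set.image2_mul,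
    Set.image_image2_distrib mon_add]

theorem monIdeal_zero : monIdeal 0 = 1 := by
  simp [monIdeal, ← Set.singleton_zero, mon_zero]

theorem monIdeal_nsmul (n : ℕ) (S : Set (ℕ × ℕ)) : monIdeal (n • S) = monIdeal S ^ n := by
  induction n with
  | zero => rw [zero_nsmul, pow_zero, monIdeal_zero]
  | succ n ih => rw [succ_nsmul, pow_succ, monIdeal_add, ih]

theorem monIdeal_sum {ι : Type*} (s : Finset ι) (F : ι → Set (ℕ × ℕ)) :
    monIdeal (∑ i ∈ s, F i) = ∏ i ∈ s, monIdeal (F i) := by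
  induction s using Finset.cons_induction with
  | empty => rw [Finset.sum_empty, Finset.prod_empty, monIdeal_zero]
  | cons a s ha ih => rw [Finset.sum_cons, Finset.prod_cons, monIdeal_add, ih]

def weight (u v : ℕ) : ℕ × ℕ →+ ℕ := (AddMonoidHom.mulLeft u).coprod (AddMonoidHom.mulLeft v)

@[simp]
theorem weight_apply (u v : ℕ) (x : ℕ × ℕ) : weight u v x = u * x.1 + v * x.2 := rfl

theorem weight_mono (u v : ℕ) : Monotone (weight u v) := fun x y h => by
  simp only [weight_apply]
  gcongr
  exacts [h.1, h.2]

def halfPlane (α β : ℕ) : Set (ℕ × ℕ) := {x | α * β ≤ weight β α x}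

theorem isLeast_weight_image_halfPlane (u v : ℕ) {α β : ℕ} (hα : 0 < α) (hβ : 0 < β) :
    IsLeast (weight u v '' halfPlane α β) (min (u * α) (v * β)) := by
  refine ⟨?_, ?_⟩
  · rcases le_total (u * α) (v * β) with h | h
    · exact ⟨(α, 0), by simp [halfPlane, mul_comm], by simp [h]⟩
    · exact ⟨(0, β), by simp [halfPlane], by simp [h]⟩
  · rintro _ ⟨x, hx, rfl⟩
    simp only [halfPlane, Set.mem_ofPred_eq, weight_apply] at hx ⊢
    refine Nat.le_of_mul_le_mul_left ?_ (Nat.mul_pos hα hβ)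
    calc α * β * min (u * α) (v * β)
        ≤ (β * x.1 + α * x.2) * min (u * α) (v * β) := Nat.mul_le_mul_right _ hx
      _ ≤ β * x.1 * (u * α) + α * x.2 * (v * β) := by
        rw [add_mul]
        exact add_le_add (Nat.mul_le_mul_left _ (min_le_left _ _))
          (Nat.mul_le_mul_left _ (min_le_right _ _))
      _ = α * β * (u * x.1 + v * x.2) := by ring

theorem le_weight_of_mem_nsmul_halfPlane {α β g : ℕ} (hα : 0 < α) (hβ : 0 < β) {s : ℕ × ℕ}
    (hs : s ∈ g • halfPlane α β) : g * (α * β) ≤ weight β α s := by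
  have h := ((isLeast_weight_image_halfPlane β α hα hβ).nsmul g).2
    (Set.image_nsmul (weight β α) _ g ▸ Set.mem_image_of_mem _ hs)
  simpa [mul_comm β α] using h

theorem exists_mem_nsmul_halfPlane_le {α β : ℕ} (hα : 0 < α) (hβ : 0 < β) (g : ℕ) {x : ℕ × ℕ}
    (hx : g * (α * β) ≤ weight β α x) : ∃ s ∈ g • halfPlane α β, s ≤ x := by
  induction g generalizing x with
  | zero => exact ⟨0, rfl, zero_le⟩
  | succ g ih =>
    rw [succ_nsmul]
    rcases eq_or_ne g 0 with rfl | hg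
    · exact ⟨0 + x, Set.add_mem_add rfl (by simpa [halfPlane] using hx), by simp⟩
    obtain ⟨e, he, hex⟩ : ∃ e ∈ ({(α, 0), (0, β)} : Set (ℕ × ℕ)), e ≤ x := by
      by_contra! h
      have h1 : β * x.1 < β * α :=
        Nat.mul_lt_mul_of_pos_left (by simpa [Prod.le_def] using h (α, 0) (by simp)) hβ
      have h2 : α * x.2 < α * β :=
        Nat.mul_lt_mul_of_pos_left (by simpa [Prod.le_def] using h (0, β) (by simp)) hα
      rw [weight_apply] at hx
      nlinarith [Nat.mul_le_mul_right (α * β) (Nat.pos_of_ne_zero hg)]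
    have hwe : weight β α e = α * β := by rcases he with rfl | rfl <;> simp [mul_comm]
    obtain ⟨y, rfl⟩ := exists_add_of_le hex
    rw [map_add, hwe, add_one_mul, add_comm] at hx
    obtain ⟨s, hs, hsy⟩ := ih (Nat.le_of_add_le_add_left hx)
    refine ⟨s + e, Set.add_mem_add hs ?_, (add_comm _ _).trans_le (add_le_add le_rfl hsy)⟩
    simpa [halfPlane] using hwe.ge

theorem span_X_pow_pair_eq_monIdeal (α β : ℕ) :
    Ideal.span {(X 0 : MvPolynomial (Fin 2) ℂ) ^ α, X 1 ^ β} = monIdeal {(α, 0), (0, β)} := by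
  simp [monIdeal, Set.image_pair, mon]

theorem exists_pow_mem_pow_span_iff {α β : ℕ} (hα : 0 < α) (hβ : 0 < β) (x : ℕ × ℕ) :
    (∃ p, 1 ≤ p ∧ mon x ^ p ∈ Ideal.span {(X 0 : MvPolynomial (Fin 2) ℂ) ^ α, X 1 ^ β} ^ p) ↔
      x ∈ halfPlane α β := by
  simp_rw [span_X_pow_pair_eq_monIdeal, ← monIdeal_nsmul, ← mon_nsmul, mon_mem_monIdeal_iff]
  constructor
  · rintro ⟨p, hp, s, hs, hsx⟩
    have hpair : ({(α, 0), (0, β)} : Set (ℕ × ℕ)) ⊆ halfPlane α β := by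
      simp [Set.insert_subset_iff, halfPlane, mul_comm]
    have h := (le_weight_of_mem_nsmul_halfPlane hα hβ (Set.nsmul_subset_nsmul_left hpair hs)).trans
      (weight_mono β α hsx)
    rw [map_nsmul, smul_eq_mul] at h
    exact Nat.le_of_mul_le_mul_left h hp
  · intro hx
    by_cases h1 : α ≤ x.1
    · exact ⟨1, le_rfl, (α, 0), by simp, by simpa [Prod.le_def] using h1⟩
    · obtain ⟨r, hr⟩ := exists_add_of_le (not_le.1 h1).le
      refine ⟨α, hα, x.1 • (α, 0) + r • (0, β), ?_, ?_⟩
      · rw [hr, add_nsmul]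
        exact Set.add_mem_add (Set.nsmul_mem_nsmul (by simp)) (Set.nsmul_mem_nsmul (by simp))
      · simp only [halfPlane, Set.mem_ofPred_eq, weight_apply] at hx
        refine ⟨by simp [mul_comm], ?_⟩
        simp only [Prod.snd_add, Prod.smul_snd, smul_eq_mul, mul_zero, zero_add]
        nlinarith

theorem nIdeal_eq_monIdeal {α β : ℕ} (hα : 0 < α) (hβ : 0 < β) :
    nIdeal α β = monIdeal (halfPlane α β) := by
  rw [nIdeal, monIdeal]
  congr 1
  ext f
  constructor
  · rintro ⟨a, b, rfl, hp⟩
    exact ⟨(a, b), (exists_pow_mem_pow_span_iff hα hβ (a, b)).1 hp, rfl⟩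
  · rintro ⟨x, hx, rfl⟩
    exact ⟨x.1, x.2, rfl, (exists_pow_mem_pow_span_iff hα hβ x).2 hx⟩

/-- The exponent-set form of `m ^ q ∈ I ^ q → m ∈ I`, for `m ^ q` a multiple of `w ^ q₁ P ^ q₂`. -/
def SegmentClosed (Γ : Set (ℕ × ℕ)) : Prop :=
  ∀ w ∈ Γ, ∀ P ∈ Γ, ∀ (q₁ q₂ : ℕ) (x : ℕ × ℕ),
    q₁ + q₂ ≠ 0 → q₁ • w + q₂ • P ≤ (q₁ + q₂) • x → x ∈ Γ

theorem segmentClosed_setOf_mon_mem {I : Ideal (MvPolynomial (Fin 2) ℂ)}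
    [IsIntegrallyClosed (reesAlgebra I)] (hI : I ≠ ⊥) : SegmentClosed {x | mon x ∈ I} := by
  intro w hw P hP q₁ q₂ x hq hle
  refine Ideal.mem_of_pow_mem_pow_of_isIntegrallyClosed_reesAlgebra hI hq ?_
  rw [← mon_nsmul]
  refine (I ^ (q₁ + q₂)).mem_of_dvd (mon_dvd_mon hle) ?_
  rw [mon_add, mon_nsmul, mon_nsmul, pow_add]
  exact Ideal.mul_mem_mul (Ideal.pow_mem_pow hw _) (Ideal.pow_mem_pow hP _)

theorem SegmentClosed.preimage_add {Γ : Set (ℕ × ℕ)} (hΓ : SegmentClosed Γ) (c : ℕ × ℕ) :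
    SegmentClosed {x | x + c ∈ Γ} := by
  intro w hw P hP q₁ q₂ x hq hle
  refine hΓ _ hw _ hP q₁ q₂ _ hq ?_
  calc q₁ • (w + c) + q₂ • (P + c) = q₁ • w + q₂ • P + (q₁ + q₂) • c := by
        rw [smul_add, smul_add, add_nsmul]; abel
    _ ≤ (q₁ + q₂) • (x + c) := by rw [smul_add]; exact add_le_add hle le_rfl

theorem exists_supporting_line {Γ : Set (ℕ × ℕ)} {A B : ℕ} (hA : (A, 0) ∈ Γ) (hB : B ≠ 0)
    (hBmin : ∀ b < B, (0, b) ∉ Γ) :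
    ∃ a b B', 0 < a ∧ 0 < b ∧ B = B' + b ∧ (a, B') ∈ Γ ∧
      ∀ γ ∈ Γ, a * B ≤ b * γ.1 + a * γ.2 := by
  have hpos : ∀ γ ∈ Γ, γ.2 < B → 0 < γ.1 := fun γ hγ h2 =>
    Nat.pos_of_ne_zero fun h0 => hBmin _ h2 (by rwa [← h0])
  set C := {γ ∈ Γ | γ.2 < B ∧ γ.1 ≤ A}
  have hCfin : C.Finite := (Set.finite_Iic (A, B)).subset fun γ hγ => ⟨hγ.2.2, hγ.2.1.le⟩
  -- `v` is the next vertex of the Newton polygon, of steepest slope from `(0, B)`; the points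
  -- beyond `A` need not be searched, as `(A, 0)` is a candidate
  obtain ⟨v, ⟨hvΓ, hv2, -⟩, hvmax⟩ := Set.exists_max_image C (fun γ => ((B : ℚ) - γ.2) / γ.1)
    hCfin ⟨(A, 0), hA, Nat.pos_of_ne_zero hB, le_rfl⟩
  obtain ⟨b, hb⟩ := exists_add_of_le hv2.le
  have hslope : ∀ γ ∈ C, ((B : ℚ) - γ.2) * v.1 ≤ b * γ.1 := by
    intro γ hγ
    have h := hvmax γ hγ
    rw [div_le_div_iff₀ (by exact_mod_cast hpos γ hγ.1 hγ.2.1)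
      (by exact_mod_cast hpos v hvΓ hv2)] at h
    have hBq : (B : ℚ) = v.2 + b := by exact_mod_cast hb
    rw [hBq] at h ⊢
    linarith
  refine ⟨v.1, b, v.2, hpos v hvΓ hv2, by omega, by omega, hvΓ, fun γ hγ => ?_⟩
  rcases le_or_gt B γ.2 with h2 | h2
  · exact le_add_left (Nat.mul_le_mul_left _ h2)
  rcases le_or_gt γ.1 A with h1 | h1
  · have := hslope γ ⟨hγ, h2, h1⟩
    qify
    linarith
  · have := hslope (A, 0) ⟨hA, Nat.pos_of_ne_zero hB, le_rfl⟩
    have hA1 : (A : ℚ) ≤ γ.1 := by exact_mod_cast h1.le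
    qify
    push_cast at this
    nlinarith

theorem exists_supporting_edge {Γ : Set (ℕ × ℕ)} {A B : ℕ} (hA : (A, 0) ∈ Γ) (hB : B ≠ 0)
    (hBmin : ∀ b < B, (0, b) ∉ Γ) :
    ∃ α β g B', 0 < α ∧ 0 < β ∧ α.Coprime β ∧ 0 < g ∧ B = B' + g * β ∧ (g * α, B') ∈ Γ ∧
      ∀ γ ∈ Γ, α * B ≤ β * γ.1 + α * γ.2 := by
  obtain ⟨a, b, B', ha, hb, hB', hP, hsupp⟩ := exists_supporting_line hA hB hBmin
  obtain ⟨g, α, β, hg, hcop, rfl, rfl⟩ := Nat.exists_coprime' (Nat.gcd_pos_of_pos_left b ha)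
  refine ⟨α, β, g, B', Nat.pos_of_mul_pos_right ha, Nat.pos_of_mul_pos_right hb, hcop, hg,
    by rw [hB', mul_comm], by rwa [mul_comm], fun γ hγ => Nat.le_of_mul_le_mul_left ?_ hg⟩
  calc g * (α * B) = α * g * B := by ring
    _ ≤ β * g * γ.1 + α * g * γ.2 := hsupp γ hγ
    _ = g * (β * γ.1 + α * γ.2) := by ring

def SupportedOnPrimitive (δ : (ℕ × ℕ) →₀ ℕ) : Prop :=
  ∀ p ∈ δ.support, 0 < p.1 ∧ 0 < p.2 ∧ Nat.gcd p.1 p.2 = 1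

section Peel

variable {Γ : Set (ℕ × ℕ)} {α β g B' : ℕ}

theorem nsmul_halfPlane_add_subset (hup : IsUpperSet Γ) (hcl : SegmentClosed Γ) (hα : 0 < α)
    (hβ : 0 < β) (hB : (0, B' + g * β) ∈ Γ)
    (hsupp : ∀ γ ∈ Γ, α * (B' + g * β) ≤ β * γ.1 + α * γ.2) :
    g • halfPlane α β + {x | x + (g * α, 0) ∈ Γ} ⊆ Γ := by
  rintro _ ⟨s, hs, t, ht, rfl⟩
  have hs' := le_weight_of_mem_nsmul_halfPlane hα hβ hs
  rw [weight_apply] at hs'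
  rw [Set.mem_ofPred_eq] at ht
  by_cases hs1 : g * α ≤ s.1
  · refine hup (show t + (g * α, 0) ≤ s + t from ?_) ht
    rw [add_comm s]
    exact add_le_add le_rfl ⟨hs1, zero_le⟩
  obtain ⟨r, hr⟩ := exists_add_of_le (not_le.1 hs1).le
  have hrβ : r * β ≤ α * s.2 := by nlinarith
  have hP := hsupp _ ht
  simp only [Prod.fst_add, Prod.snd_add, add_zero] at hP
  refine hcl _ hB _ ht r (s.1 + t.1) _ (by omega) ⟨?_, ?_⟩
  · simp only [Prod.fst_add, Prod.smul_fst, smul_eq_mul, mul_zero, zero_add, hr]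
    nlinarith
  · simp only [Prod.snd_add, Prod.smul_snd, smul_eq_mul, add_zero]
    refine Nat.le_of_mul_le_mul_left ?_ hα
    nlinarith [Nat.mul_le_mul_left r hP, Nat.mul_le_mul_right (t.1 + g * α) hrβ]

theorem exists_mem_nsmul_halfPlane_add_le (hα : 0 < α) (hβ : 0 < β) (hP : (g * α, B') ∈ Γ)
    (hsupp : ∀ γ ∈ Γ, α * (B' + g * β) ≤ β * γ.1 + α * γ.2) {γ : ℕ × ℕ} (hγ : γ ∈ Γ) :
    ∃ s ∈ g • halfPlane α β + {x | x + (g * α, 0) ∈ Γ}, s ≤ γ := by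
  by_cases h1 : g * α ≤ γ.1
  · obtain ⟨t, rfl⟩ := exists_add_of_le (show ((g * α, 0) : ℕ × ℕ) ≤ γ from ⟨h1, zero_le⟩)
    refine ⟨g • (α, 0) + t, Set.add_mem_add (Set.nsmul_mem_nsmul ?_) ?_, ?_⟩
    · simp [halfPlane, mul_comm]
    · simpa [add_comm t] using hγ
    · simp
  have hγ' := hsupp γ hγ
  have h2 : B' ≤ γ.2 := by
    by_contra! h2
    nlinarith [Nat.mul_lt_mul_of_pos_left (not_le.1 h1) hβ, Nat.mul_lt_mul_of_pos_left h2 hα]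
  obtain ⟨y, hy⟩ := exists_add_of_le h2
  obtain ⟨s, hs, hsle⟩ := exists_mem_nsmul_halfPlane_le hα hβ g (x := (γ.1, y)) (by
    rw [weight_apply]
    nlinarith)
  refine ⟨s + (0, B'), Set.add_mem_add hs (by simpa using hP), ?_⟩
  calc s + (0, B') ≤ (γ.1, y) + (0, B') := add_le_add hsle le_rfl
    _ = γ := by ext <;> simp [hy, add_comm]

theorem monIdeal_eq_nIdeal_pow_mul (hup : IsUpperSet Γ) (hcl : SegmentClosed Γ) (hα : 0 < α)
    (hβ : 0 < β) (hB : (0, B' + g * β) ∈ Γ) (hP : (g * α, B') ∈ Γ)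
    (hsupp : ∀ γ ∈ Γ, α * (B' + g * β) ≤ β * γ.1 + α * γ.2) :
    monIdeal Γ = nIdeal α β ^ g * monIdeal {x | x + (g * α, 0) ∈ Γ} := by
  rw [nIdeal_eq_monIdeal hα hβ, ← monIdeal_nsmul, ← monIdeal_add]
  exact le_antisymm
    (monIdeal_le_monIdeal fun γ hγ => exists_mem_nsmul_halfPlane_add_le hα hβ hP hsupp hγ)
    (monIdeal_le_monIdeal fun s hs =>
      ⟨s, nsmul_halfPlane_add_subset hup hcl hα hβ hB hsupp hs, le_rfl⟩)

end Peel

theorem exists_monIdeal_eq_prod_nIdeal {Γ : Set (ℕ × ℕ)} (hup : IsUpperSet Γ)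
    (hcl : SegmentClosed Γ) {A B : ℕ} (hA : (A, 0) ∈ Γ) (hB : (0, B) ∈ Γ) :
    ∃ δ, SupportedOnPrimitive δ ∧ monIdeal Γ = δ.prod fun p e => nIdeal p.1 p.2 ^ e := by
  induction B using Nat.strong_induction_on generalizing Γ with
  | _ B ih =>
  by_cases hBmin : ∃ b < B, (0, b) ∈ Γ
  · obtain ⟨b, hb, hbΓ⟩ := hBmin
    exact ih b hb hup hcl hA hbΓ
  push Not at hBmin
  rcases eq_or_ne B 0 with rfl | hB0
  · refine ⟨0, fun p hp => by simp at hp, ?_⟩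
    rw [Finsupp.prod_zero_index, Ideal.one_eq_top, Ideal.eq_top_iff_one, ← mon_zero]
    exact mon_mem_monIdeal_iff.2 ⟨0, hB, le_rfl⟩
  obtain ⟨α, β, g, B', hα, hβ, hcop, hg, rfl, hP, hsupp⟩ := exists_supporting_edge hA hB0 hBmin
  obtain ⟨δ, hδ, hδΓ⟩ := ih B' (by have := Nat.mul_pos hg hβ; omega)
    (Γ := {x | x + (g * α, 0) ∈ Γ}) (hup.preimage (monotone_id.add_const _)) (hcl.preimage_add _)
    (hup (by simp) hA : (A, 0) + (g * α, 0) ∈ Γ) (by simpa using hP)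
  refine ⟨δ + Finsupp.single (α, β) g, fun p hp => ?_, ?_⟩
  · rcases Finset.mem_union.1 (Finsupp.support_add hp) with hp | hp
    · exact hδ p hp
    · rw [Finset.mem_singleton.1 (Finsupp.support_single_subset hp)]
      exact ⟨hα, hβ, hcop⟩
  · rw [monIdeal_eq_nIdeal_pow_mul hup hcl hα hβ hB hP hsupp, hδΓ,
      Finsupp.prod_add_index' (fun _ => pow_zero _) (fun _ _ _ => pow_add _ _ _)]
    simp only [Finsupp.prod_single_index, pow_zero]
    exact mul_comm _ _

theorem le_of_isLeast_of_monIdeal_le {S T : Set (ℕ × ℕ)} {u v a b : ℕ}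
    (h : monIdeal S ≤ monIdeal T) (hS : IsLeast (weight u v '' S) a)
    (hT : IsLeast (weight u v '' T) b) : b ≤ a := by
  obtain ⟨s, hs, rfl⟩ := hS.1
  obtain ⟨t, ht, hts⟩ := mon_mem_monIdeal_iff.1 (h (mon_mem_monIdeal_iff.2 ⟨s, hs, le_rfl⟩))
  exact (hT.2 ⟨t, ht, rfl⟩).trans (weight_mono u v hts)

theorem isLeast_weight_image_sum {ι : Type*} (u v : ℕ) (s : Finset ι) (F : ι → Set (ℕ × ℕ))
    (c : ι → ℕ) (h : ∀ i ∈ s, IsLeast (weight u v '' F i) (c i)) :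
    IsLeast (weight u v '' ∑ i ∈ s, F i) (∑ i ∈ s, c i) := by
  induction s using Finset.cons_induction with
  | empty => simp
  | cons a s ha ih =>
    rw [Finset.sum_cons, Finset.sum_cons, Set.image_add]
    exact (h a (Finset.mem_cons_self a s)).add (ih fun i hi => h i (Finset.mem_cons_of_mem hi))

def weightedOrder (δ : (ℕ × ℕ) →₀ ℕ) (u v : ℕ) : ℕ :=
  δ.sum fun p e => e * min (u * p.1) (v * p.2)

section Uniqueness

variable {δ δ₁ δ₂ : (ℕ × ℕ) →₀ ℕ}

theorem prod_nIdeal_eq_monIdeal (hδ : ∀ p ∈ δ.support, 0 < p.1 ∧ 0 < p.2) :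
    (δ.prod fun p e => nIdeal p.1 p.2 ^ e) = monIdeal (δ.sum fun p e => e • halfPlane p.1 p.2) := by
  rw [Finsupp.sum, monIdeal_sum]
  exact Finset.prod_congr rfl fun p hp => by
    dsimp only
    rw [monIdeal_nsmul, nIdeal_eq_monIdeal (hδ p hp).1 (hδ p hp).2]

theorem isLeast_weight_image_finsuppSum (hδ : ∀ p ∈ δ.support, 0 < p.1 ∧ 0 < p.2) (u v : ℕ) :
    IsLeast (weight u v '' δ.sum fun p e => e • halfPlane p.1 p.2) (weightedOrder δ u v) :=
  isLeast_weight_image_sum u v _ _ _ fun p hp => by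
    simpa [Set.image_nsmul] using
      (isLeast_weight_image_halfPlane u v (hδ p hp).1 (hδ p hp).2).nsmul (δ p)

theorem weightedOrder_eq_of_prod_nIdeal_eq (hδ₁ : ∀ p ∈ δ₁.support, 0 < p.1 ∧ 0 < p.2)
    (hδ₂ : ∀ p ∈ δ₂.support, 0 < p.1 ∧ 0 < p.2)
    (h : (δ₁.prod fun p e => nIdeal p.1 p.2 ^ e) = δ₂.prod fun p e => nIdeal p.1 p.2 ^ e)
    (u v : ℕ) : weightedOrder δ₁ u v = weightedOrder δ₂ u v := by
  rw [prod_nIdeal_eq_monIdeal hδ₁, prod_nIdeal_eq_monIdeal hδ₂] at h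
  have h₁ := isLeast_weight_image_finsuppSum hδ₁ u v
  have h₂ := isLeast_weight_image_finsuppSum hδ₂ u v
  exact le_antisymm (le_of_isLeast_of_monIdeal_le h.ge h₂ h₁)
    (le_of_isLeast_of_monIdeal_le h.le h₁ h₂)

theorem eq_of_coprime_of_mul_eq_mul {a b c d : ℕ} (hab : a.Coprime b) (hcd : c.Coprime d)
    (h : a * d = b * c) : a = c ∧ b = d := by
  have hac : a = c := Nat.dvd_antisymm (hab.dvd_of_dvd_mul_left ⟨d, h.symm⟩)
    (hcd.dvd_of_dvd_mul_right ⟨b, by rw [h, mul_comm]⟩)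
  subst hac
  rcases Nat.eq_zero_or_pos a with rfl | ha
  · exact ⟨rfl, (Nat.coprime_zero_left _).1 hab ▸ ((Nat.coprime_zero_left _).1 hcd).symm⟩
  · exact ⟨rfl, (Nat.eq_of_mul_eq_mul_left ha (h.trans (mul_comm b a))).symm⟩

theorem min_mixed_difference {α β n : ℕ} (hαβ : α.Coprime β) {p : ℕ × ℕ} (hp : p.1.Coprime p.2)
    (hn : p.1 ≤ n ∧ p.2 ≤ n) :
    min ((n * β + 1) * p.1) ((n * α + 1) * p.2) + min (n * β * p.1) (n * α * p.2) =
      min ((n * β + 1) * p.1) (n * α * p.2) + min (n * β * p.1) ((n * α + 1) * p.2) +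
        if p = (α, β) then min α β else 0 := by
  obtain ⟨a, b⟩ := p
  dsimp only at hp hn ⊢
  rw [add_one_mul, add_one_mul]
  rcases lt_trichotomy (β * a) (α * b) with h | h | h
  · have hne : (a, b) ≠ (α, β) := by rintro ⟨⟩; exact (mul_comm β α ▸ h).false
    have : n * β * a + n ≤ n * α * b := by nlinarith [Nat.mul_le_mul_left n h]
    rw [if_neg hne]
    omega
  · obtain ⟨rfl, rfl⟩ := eq_of_coprime_of_mul_eq_mul hαβ hp h.symm
    have : n * β * α = n * α * β := by ring
    rw [if_pos rfl]
    omega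
  · have hne : (a, b) ≠ (α, β) := by rintro ⟨⟩; exact (mul_comm β α ▸ h).false
    have : n * α * b + n ≤ n * β * a := by nlinarith [Nat.mul_le_mul_left n h]
    rw [if_neg hne]
    omega

theorem weightedOrder_mixed_difference (hδ : SupportedOnPrimitive δ) {α β n : ℕ}
    (hαβ : α.Coprime β) (hn : ∀ p ∈ δ.support, p.1 ≤ n ∧ p.2 ≤ n) :
    weightedOrder δ (n * β + 1) (n * α + 1) + weightedOrder δ (n * β) (n * α) =
      weightedOrder δ (n * β + 1) (n * α) + weightedOrder δ (n * β) (n * α + 1) +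
        δ (α, β) * min α β := by
  classical
  have hite : δ (α, β) * min α β =
      ∑ p ∈ δ.support, δ p * if p = (α, β) then min α β else 0 := by
    simp only [mul_ite, mul_zero, Finset.sum_ite_eq', Finsupp.mem_support_iff]
    split_ifs with h
    · rfl
    · simp [not_not.1 h]
  simp only [weightedOrder, Finsupp.sum, hite, ← Finset.sum_add_distrib, ← mul_add]
  exact Finset.sum_congr rfl fun p hp => by rw [min_mixed_difference hαβ (hδ p hp).2.2 (hn p hp)]

theorem eq_of_weightedOrder_eq (hδ₁ : SupportedOnPrimitive δ₁)
    (hδ₂ : SupportedOnPrimitive δ₂)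
    (h : ∀ u v, weightedOrder δ₁ u v = weightedOrder δ₂ u v) : δ₁ = δ₂ := by
  ext q
  by_cases hq : q ∈ δ₁.support ∪ δ₂.support
  swap
  · simp only [Finset.mem_union, Finsupp.mem_support_iff, not_or, not_not] at hq
    rw [hq.1, hq.2]
  obtain ⟨hq1, hq2, hqc⟩ := (Finset.mem_union.1 hq).elim (hδ₁ q) (hδ₂ q)
  set n := (δ₁.support ∪ δ₂.support).sup fun p => p.1 + p.2
  have hn : ∀ p ∈ δ₁.support ∪ δ₂.support, p.1 ≤ n ∧ p.2 ≤ n := fun p hp => by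
    have := Finset.le_sup (f := fun p : ℕ × ℕ => p.1 + p.2) hp
    omega
  have e₁ := weightedOrder_mixed_difference hδ₁ hqc fun p hp => hn p (Finset.mem_union_left _ hp)
  have e₂ := weightedOrder_mixed_difference hδ₂ hqc fun p hp => hn p (Finset.mem_union_right _ hp)
  simp only [h, Prod.mk.eta] at e₁ e₂
  exact Nat.eq_of_mul_eq_mul_right (lt_min hq1 hq2) (by omega)

theorem eq_of_prod_nIdeal_eq (hδ₁ : SupportedOnPrimitive δ₁)
    (hδ₂ : SupportedOnPrimitive δ₂)
    (h : (δ₁.prod fun p e => nIdeal p.1 p.2 ^ e) = δ₂.prod fun p e => nIdeal p.1 p.2 ^ e) :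
    δ₁ = δ₂ :=
  eq_of_weightedOrder_eq hδ₁ hδ₂ <| weightedOrder_eq_of_prod_nIdeal_eq
    (fun p hp => ⟨(hδ₁ p hp).1, (hδ₁ p hp).2.1⟩) (fun p hp => ⟨(hδ₂ p hp).1, (hδ₂ p hp).2.1⟩) h

end Uniqueness

end MonomialIdeal

open MonomialIdeal

/-- **Unique factorisation of normal monomial ideals.** Every normal monomial ideal
`I ⊆ ℂ[x,y]` of finite colength factors uniquely as a product `∏ n_{α,β}^{δ(α,β)}`
over finitely many coprime pairs `(α,β)` of positive integers. -/
theorem normal_monomial_ideal_factorisation (I : Ideal (MvPolynomial (Fin 2) ℂ))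
    (hmon : IsMonomialIdeal I)
    (hfin : FiniteDimensional ℂ (MvPolynomial (Fin 2) ℂ ⧸ I))
    (hnormal : IsIntegrallyClosed ↥(reesAlgebra I)) :
    ∃! δ : (ℕ × ℕ) →₀ ℕ,
      (∀ p ∈ δ.support, 0 < p.1 ∧ 0 < p.2 ∧ Nat.gcd p.1 p.2 = 1) ∧
      I = ∏ p ∈ δ.support, nIdeal p.1 p.2 ^ δ p := by
  obtain ⟨S, hS⟩ := hmon
  have hIΓ : I = monIdeal {x | mon x ∈ I} := (monIdeal_setOf_mon_mem hS).symm
  obtain ⟨A, hA⟩ := exists_X_pow_mem hS 0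
  obtain ⟨B, hB⟩ := exists_X_pow_mem hS 1
  have hI : I ≠ ⊥ := by rintro rfl; simp at hA
  obtain ⟨δ, hδ, hδI⟩ := exists_monIdeal_eq_prod_nIdeal (isUpperSet_setOf_mon_mem I)
    (segmentClosed_setOf_mon_mem hI) (A := A) (B := B) (by simpa [mon] using hA)
    (by simpa [mon] using hB)
  exact ⟨δ, ⟨hδ, hIΓ.trans hδI⟩, fun δ' hδ' =>
    eq_of_prod_nIdeal_eq hδ'.1 hδ (hδ'.2.symm.trans (hIΓ.trans hδI))⟩
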